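/- Let α_i, α_j > 0. There exist no nonnegative reals p_{i,1}, p_{j,1} and positive reals p_{i,2}, p_{j,2} such that both C(p_{i,2}/(p_{j,1} + p_{j,2} + α_j)) > C(p_{i,2}/(p_{i,1} + α_i)) and C(p_{j,2}/(p_{i,1} + p_{i,2} + α_i)) > C(p_{j,2}/(p_{j,1} + α_j)) hold simultaneously, where C(x) = log₂(1 + x). (This is the concluding claim of the proof of Proposition 3: for the decoding orders 'UE j decodes x_{A2} first and UE i decodes x_{B2} first', feasible power and rate allocations do not exist, since the two conditions would jointly force p_{i,2} + p_{j,2} < 0.) -/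
import Mathlib

/-- The AWGN capacity function `C(x) = log₂(1 + x)`. -/
noncomputable def Cap (x : ℝ) : ℝ := Real.logb 2 (1 + x)

/-- No feasible power allocation lets both users decode each other's interference first
(concluding claim of the proof of Proposition 3). -/
theorem prop3_no_simultaneous_cross_decoding
    (αi αj : ℝ) (hαi : 0 < αi) (hαj : 0 < αj) :
    ¬ ∃ (pi1 pj1 pi2 pj2 : ℝ),
      0 ≤ pi1 ∧ 0 ≤ pj1 ∧ 0 < pi2 ∧ 0 < pj2 ∧
      Cap (pi2 / (pj1 + pj2 + αj)) > Cap (pi2 / (pi1 + αi)) ∧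
      Cap (pj2 / (pi1 + pi2 + αi)) > Cap (pj2 / (pj1 + αj)) := by
  rintro ⟨pi1, pj1, pi2, pj2, hpi1, hpj1, hpi2, hpj2, h1, h2⟩
  have dA : 0 < pi1 + αi := by linarith
  have dB : 0 < pj1 + pj2 + αj := by linarith
  have dC : 0 < pi1 + pi2 + αi := by linarith
  have dD : 0 < pj1 + αj := by linarith
  have g1 : pi2 / (pi1 + αi) < pi2 / (pj1 + pj2 + αj) := by
    have := (Real.logb_lt_logb_iff (b := 2) (by norm_num)
      (by positivity : (0:ℝ) < 1 + pi2 / (pi1 + αi))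
      (by positivity : (0:ℝ) < 1 + pi2 / (pj1 + pj2 + αj))).mp h1
    linarith
  have g2 : pj2 / (pj1 + αj) < pj2 / (pi1 + pi2 + αi) := by
    have := (Real.logb_lt_logb_iff (b := 2) (by norm_num)
      (by positivity : (0:ℝ) < 1 + pj2 / (pj1 + αj))
      (by positivity : (0:ℝ) < 1 + pj2 / (pi1 + pi2 + αi))).mp h2
    linarith
  have k1 : pj1 + pj2 + αj < pi1 + αi :=
    (div_lt_div_iff_of_pos_left hpi2 dA dB).mp g1
  have k2 : pi1 + pi2 + αi < pj1 + αj :=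
    (div_lt_div_iff_of_pos_left hpj2 dD dC).mp g2
  linarith
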